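/- Fix λ ≥ 0 and a natural number i. Then λ·g(j,λ,{i}) ≥ 0 for all natural numbers j > i; the map j ↦ λ·g(j,λ,{i}) is decreasing for j > i, i.e. λ·g(j+1,λ,{i}) ≤ λ·g(j,λ,{i}) for all j > i; and for every natural number j ≥ 1 one has λ·g(j,λ,{j−1}) = 1 − Po({0,…,j−1};λ). -/

import Mathlib

open scoped BigOperators

/-- Poisson pmf: Po(k;lam) = lam^k * e^(-lam) / k!  (with the convention 0^0 = 1). -/
noncomputable def Po (k : ℕ) (lam : ℝ) : ℝ := lam ^ k * Real.exp (-lam) / (Nat.factorial k)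

/-- Poisson measure of a set A of naturals: Po(A;lam) = sum over k in A of Po(k;lam). -/
noncomputable def PoSet (A : Set ℕ) (lam : ℝ) : ℝ := ∑' k : A, Po k lam

/-- The scalar Stein-Chen solution g(j,lam,A), defined recursively by g(0,lam,A) = 0 and
g(j,lam,A) = lam⁻¹ * ((j-1)*g(j-1,lam,A) + 1_A(j-1) - Po(A;lam))
             + (1/j) * 1_{lam=0} * (1_A(0) - 1_A(j)) for j ≥ 1,
with the convention 0⁻¹ = 0. -/
noncomputable def steinChen : ℕ → ℝ → Set ℕ → ℝ
  | 0, _, _ => 0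
  | (j + 1), lam, A =>
      lam⁻¹ * ((j : ℝ) * steinChen j lam A
          + A.indicator (fun _ => (1 : ℝ)) j - PoSet A lam)
        + (1 / ((j : ℝ) + 1)) * (if lam = 0 then (1 : ℝ) else 0)
          * (A.indicator (fun _ => (1 : ℝ)) 0 - A.indicator (fun _ => (1 : ℝ)) (j + 1))

/-!
For `λ > 0`, multiply the recursion `λ g(j+1) = j g(j) + 1_A(j) - Po(A)` by `Po(j)` and use
`j Po(j) = λ Po(j-1)`: the quantity `w(j) := Po(j) · λ g(j+1)` then satisfies
`w(j) = w(j-1) + (1_A(j) - Po(A)) Po(j)`, so it is a partial sum. For `A = {i}` and `j ≥ i` this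
gives `Po(j) · λ g(j+1) = Po(i) · T(j)` with the Poisson tail `T(j) = 1 - Po({0,…,j})`, whence
nonnegativity and the value at `j = i`. Monotonicity reduces to `(j+1) T(j+1) ≤ λ T(j)`, which
holds termwise since `(j+1) Po(k+1) ≤ (k+1) Po(k+1) = λ Po(k)` for `k ≥ j`.
-/

section Poisson

variable {lam : ℝ}

lemma Po_nonneg (hlam : 0 ≤ lam) (k : ℕ) : 0 ≤ Po k lam := by
  unfold Po; positivity

lemma Po_pos (hlam : 0 < lam) (k : ℕ) : 0 < Po k lam := by
  unfold Po; positivity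

lemma Po_zero_right (k : ℕ) : Po k 0 = if k = 0 then 1 else 0 := by
  rcases k with _ | k <;> simp [Po]

lemma succ_mul_Po_succ (lam : ℝ) (k : ℕ) : ((k : ℝ) + 1) * Po (k + 1) lam = lam * Po k lam := by
  have hfac : (k.factorial : ℝ) ≠ 0 := by positivity
  simp only [Po, Nat.factorial_succ, Nat.cast_mul, Nat.cast_succ, pow_succ]
  field_simp

lemma hasSum_Po (lam : ℝ) : HasSum (fun k => Po k lam) 1 := by
  have h := (NormedSpace.expSeries_div_hasSum_exp lam).mul_right (Real.exp (-lam))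
  rw [← Real.exp_eq_exp_ℝ, ← Real.exp_add, add_neg_cancel, Real.exp_zero] at h
  refine h.congr_fun fun k => ?_
  rw [Po]; ring

lemma one_sub_sum_range_Po (lam : ℝ) (n : ℕ) :
    1 - ∑ k ∈ Finset.range n, Po k lam = ∑' k, Po (k + n) lam := by
  rw [← (hasSum_Po lam).tsum_eq, ← (hasSum_Po lam).summable.sum_add_tsum_nat_add n]
  ring

lemma sum_range_Po_le_one (hlam : 0 ≤ lam) (n : ℕ) : ∑ k ∈ Finset.range n, Po k lam ≤ 1 := by
  have := one_sub_sum_range_Po lam n ▸ tsum_nonneg fun k => Po_nonneg hlam (k + n)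
  linarith

lemma succ_mul_Po_tail_le (hlam : 0 ≤ lam) (n : ℕ) :
    ((n : ℝ) + 1) * (1 - ∑ k ∈ Finset.range (n + 2), Po k lam)
      ≤ lam * (1 - ∑ k ∈ Finset.range (n + 1), Po k lam) := by
  have hsum (m : ℕ) : Summable fun k => Po (k + m) lam :=
    (summable_nat_add_iff m).mpr (hasSum_Po lam).summable
  rw [one_sub_sum_range_Po, one_sub_sum_range_Po, ← tsum_mul_left, ← tsum_mul_left]
  refine ((hsum _).mul_left _).tsum_le_tsum (fun k => ?_) ((hsum _).mul_left _)
  rw [show k + (n + 2) = k + (n + 1) + 1 by omega]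
  calc ((n : ℝ) + 1) * Po (k + (n + 1) + 1) lam
      ≤ ((k + (n + 1) : ℕ) + 1) * Po (k + (n + 1) + 1) lam := by
        gcongr
        · exact Po_nonneg hlam _
        · omega
    _ = lam * Po (k + (n + 1)) lam := succ_mul_Po_succ lam _

lemma PoSet_singleton (i : ℕ) (lam : ℝ) : PoSet {i} lam = Po i lam :=
  tsum_singleton i fun k => Po k lam

lemma PoSet_Iic (n : ℕ) (lam : ℝ) :
    PoSet (Set.Iic n) lam = ∑ k ∈ Finset.range (n + 1), Po k lam := by
  have h : Set.Iic n = ↑(Finset.range (n + 1)) := by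
    ext k; simp
  rw [PoSet, h]
  exact (Finset.range (n + 1)).tsum_subtype fun k => Po k lam

end Poisson

section SteinChen

variable {lam : ℝ}

lemma mul_steinChen_succ (hlam : lam ≠ 0) (j : ℕ) (A : Set ℕ) :
    lam * steinChen (j + 1) lam A
      = j * steinChen j lam A + A.indicator (fun _ => (1 : ℝ)) j - PoSet A lam := by
  simp only [steinChen, hlam, if_false, mul_zero, zero_mul, add_zero]
  field_simp

lemma Po_mul_mul_steinChen_succ (hlam : lam ≠ 0) (j : ℕ) (A : Set ℕ) :
    Po j lam * (lam * steinChen (j + 1) lam A)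
      = ∑ k ∈ Finset.range (j + 1),
          (A.indicator (fun _ => (1 : ℝ)) k - PoSet A lam) * Po k lam := by
  induction j with
  | zero => rw [zero_add, mul_steinChen_succ hlam]; simp [steinChen, mul_comm]
  | succ j ih =>
    have hprev : (j + 1 : ℝ) * Po (j + 1) lam * steinChen (j + 1) lam A
        = Po j lam * (lam * steinChen (j + 1) lam A) := by
      rw [succ_mul_Po_succ]; ring
    rw [Finset.sum_range_succ, ← ih, ← hprev, mul_steinChen_succ hlam]
    push_cast
    ring

lemma Po_mul_mul_steinChen_singleton (hlam : lam ≠ 0) {i j : ℕ} (hij : i ≤ j) :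
    Po j lam * (lam * steinChen (j + 1) lam {i})
      = Po i lam * (1 - ∑ k ∈ Finset.range (j + 1), Po k lam) := by
  have hi : i ∈ Finset.range (j + 1) := Finset.mem_range.mpr (Nat.lt_succ_of_le hij)
  simp only [Po_mul_mul_steinChen_succ hlam, sub_mul, Finset.sum_sub_distrib, PoSet_singleton,
    Set.indicator_apply, Set.mem_singleton_iff, ite_mul, one_mul, zero_mul,
    Finset.sum_ite_eq' _ _ _, if_pos hi, ← Finset.mul_sum]
  ring

lemma mul_steinChen_singleton_nonneg (hlam : 0 < lam) {i j : ℕ} (hij : i < j) :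
    0 ≤ lam * steinChen j lam {i} := by
  obtain ⟨n, rfl⟩ := Nat.exists_eq_add_of_lt hij
  have hsub := sub_nonneg.mpr (sum_range_Po_le_one hlam.le (i + n + 1))
  have h := Po_mul_mul_steinChen_singleton hlam.ne' (Nat.le_add_right i n)
  refine nonneg_of_mul_nonneg_right ?_ (Po_pos hlam (i + n))
  rw [h]
  exact mul_nonneg (Po_nonneg hlam.le i) hsub

lemma mul_steinChen_singleton_succ_le (hlam : 0 < lam) {i j : ℕ} (hij : i < j) :
    lam * steinChen (j + 1) lam {i} ≤ lam * steinChen j lam {i} := by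
  obtain ⟨n, rfl⟩ := Nat.exists_eq_add_of_lt hij
  set m := i + n
  have hm : i ≤ m := Nat.le_add_right i n
  have hcur := Po_mul_mul_steinChen_singleton hlam.ne' hm
  have hnext := Po_mul_mul_steinChen_singleton hlam.ne' (by omega : i ≤ m + 1)
  refine le_of_mul_le_mul_left ?_ (mul_pos hlam (Po_pos hlam m))
  calc lam * Po m lam * (lam * steinChen (m + 1 + 1) lam {i})
      = (m + 1) * (Po (m + 1) lam * (lam * steinChen (m + 1 + 1) lam {i})) := by
        rw [← succ_mul_Po_succ]; ring
    _ = Po i lam * ((m + 1) * (1 - ∑ k ∈ Finset.range (m + 2), Po k lam)) := by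
        rw [hnext]; ring
    _ ≤ Po i lam * (lam * (1 - ∑ k ∈ Finset.range (m + 1), Po k lam)) :=
        mul_le_mul_of_nonneg_left (succ_mul_Po_tail_le hlam.le m) (Po_nonneg hlam.le i)
    _ = lam * Po m lam * (lam * steinChen (m + 1) lam {i}) := by
        linear_combination (-lam) * hcur

lemma mul_steinChen_succ_singleton_self (hlam : 0 < lam) (i : ℕ) :
    lam * steinChen (i + 1) lam {i} = 1 - ∑ k ∈ Finset.range (i + 1), Po k lam :=
  mul_left_cancel₀ (Po_pos hlam i).ne' (Po_mul_mul_steinChen_singleton hlam.ne' le_rfl)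

end SteinChen

/-- For lam ≥ 0: lam * g(j,lam,{i}) ≥ 0 for j > i, the map j ↦ lam * g(j,lam,{i}) is
decreasing for j > i, and lam * g(j,lam,{j-1}) = 1 - Po({0,...,j-1};lam) for j ≥ 1. -/
theorem steinChen_singleton_ge (lam : ℝ) (hlam : 0 ≤ lam) (i : ℕ) :
    (∀ j : ℕ, i < j → 0 ≤ lam * steinChen j lam {i}) ∧
    (∀ j : ℕ, i < j → lam * steinChen (j + 1) lam {i} ≤ lam * steinChen j lam {i}) ∧
    (∀ j : ℕ, 1 ≤ j →
      lam * steinChen j lam {j - 1} = 1 - PoSet (Set.Iic (j - 1)) lam) := by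
  rcases hlam.eq_or_lt with rfl | hpos
  · refine ⟨fun _ _ => by simp, fun _ _ => by simp, fun j _ => ?_⟩
    simp [PoSet_Iic, Po_zero_right]
  · refine ⟨fun _ => mul_steinChen_singleton_nonneg hpos,
      fun _ => mul_steinChen_singleton_succ_le hpos, fun j hj => ?_⟩
    obtain ⟨i', rfl⟩ := Nat.exists_eq_add_of_le' hj
    rw [Nat.add_sub_cancel, PoSet_Iic]
    exact mul_steinChen_succ_singleton_self hpos i'
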